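/- Let 𝓙 ⊆ 𝒫(V) be a nonempty antichain of nonempty subsets of V. The map f ↦ ‖f‖_{U^{V,𝓙}} is a seminorm on the space of bounded measurable functions on X: for all bounded measurable f, g : X → ℝ and every c ∈ ℝ, ‖c·f‖_{U^{V,𝓙}} = |c|·‖f‖_{U^{V,𝓙}} and ‖f + g‖_{U^{V,𝓙}} ≤ ‖f‖_{U^{V,𝓙}} + ‖g‖_{U^{V,𝓙}}. -/
import Mathlib


open MeasureTheory
open scoped Classical
open scoped Pointwise

noncomputable section

/-- Recombine `(x_{V∖J}, x_J^ω)` into a point of `X = ∏_v X_v`. -/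
def recomb {V : Type} (X : V → Type) (J : Set V)
    (y : ∀ v : ↥(Jᶜ : Set V), X ↑v) (z : ∀ p : ↥J × Bool, X ↑p.1)
    (ω : ↥J → Bool) : ∀ v, X v := fun v =>
  if h : v ∈ J then z (⟨v, h⟩, ω ⟨v, h⟩) else y ⟨v, h⟩

/-- The integral `∫_{X⁺_J} ∏_{ω ∈ {0,1}^J} f(x_{V∖J}, x_J^ω) dμ⁺_J`. -/
def UJint {V : Type} [Fintype V] [DecidableEq V] (X : V → Type)
    [∀ v, MeasurableSpace (X v)] (μ : ∀ v, Measure (X v)) (J : Set V)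
    (f : (∀ v, X v) → ℝ) : ℝ :=
  ∫ p : (∀ v : ↥(Jᶜ : Set V), X ↑v) × (∀ q : ↥J × Bool, X ↑q.1),
    ∏ ω : ↥J → Bool, f (recomb X J p.1 p.2 ω)
    ∂((Measure.pi fun v : ↥(Jᶜ : Set V) => μ ↑v).prod
      (Measure.pi fun q : ↥J × Bool => μ ↑q.1))

/-- The seminorm `‖f‖_{U^{V,J}} = (UJint f)^{1/2^{|J|}}`. -/
def UJnorm {V : Type} [Fintype V] [DecidableEq V] (X : V → Type)
    [∀ v, MeasurableSpace (X v)] (μ : ∀ v, Measure (X v)) (J : Set V)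
    (f : (∀ v, X v) → ℝ) : ℝ :=
  (UJint X μ J f) ^ ((1 : ℝ) / 2 ^ J.ncard)

/-- The seminorm `‖f‖_{U^{V,𝓙}}`, an infimum over decompositions `f = Σ_i f_i` into
bounded measurable pieces. -/
def UFamNorm {V : Type} [Fintype V] [DecidableEq V] (X : V → Type)
    [∀ v, MeasurableSpace (X v)] (μ : ∀ v, Measure (X v)) (𝓙 : Finset (Set V))
    (f : (∀ v, X v) → ℝ) : ℝ :=
  sInf {r : ℝ | ∃ (m : ℕ) (g : ℕ → (∀ v, X v) → ℝ),
    (∀ i, (∃ C, ∀ x, |g i x| ≤ C) ∧ Measurable (g i)) ∧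
    (∀ x, f x = ∑ i ∈ Finset.range (m + 1), g i x) ∧
    r = ∑ i ∈ Finset.range (m + 1),
        (∏ J ∈ 𝓙, UJnorm X μ J (g i) ^ (2 ^ J.ncard)) ^
          ((1 : ℝ) / ∑ J ∈ 𝓙, (2 : ℝ) ^ J.ncard)}

-- auxiliary: rpow distributes over a product when the left factor is nonneg
lemma rpow_mul_left_aux {t u r : ℝ} (ht : 0 ≤ t) :
    (t * u) ^ r = t ^ r * u ^ r := by
  rcases le_or_gt 0 u with hu | hu
  · exact Real.mul_rpow ht hu
  rcases eq_or_lt_of_le ht with rfl | ht'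
  · rcases eq_or_ne r 0 with rfl | hr
    · simp
    · simp [Real.zero_rpow hr]
  · have htu : t * u < 0 := mul_neg_of_pos_of_neg ht' hu
    rw [Real.rpow_def_of_neg htu, Real.rpow_def_of_neg hu, Real.rpow_def_of_pos ht',
      Real.log_mul (ne_of_gt ht') (ne_of_lt hu), add_mul, Real.exp_add]
    ring

lemma UJint_const_mul {V : Type} [Fintype V] [DecidableEq V] (X : V → Type)
    [∀ v, MeasurableSpace (X v)] (μ : ∀ v, Measure (X v)) (J : Set V)
    (c : ℝ) (g : (∀ v, X v) → ℝ) :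
    UJint X μ J (fun x => c * g x) = c ^ (2 ^ J.ncard) * UJint X μ J g := by
  have hcard : Fintype.card (↥J → Bool) = 2 ^ J.ncard := by
    rw [Fintype.card_fun, Fintype.card_bool, Set.ncard_eq_toFinset_card', Set.toFinset_card]
  unfold UJint
  rw [← integral_const_mul]
  congr 1
  funext p
  rw [Finset.prod_mul_distrib, Finset.prod_const, Finset.card_univ, hcard]

lemma UJnorm_const_mul {V : Type} [Fintype V] [DecidableEq V] (X : V → Type)
    [∀ v, MeasurableSpace (X v)] (μ : ∀ v, Measure (X v)) {J : Set V}
    (hJ : J.Nonempty) (c : ℝ) (g : (∀ v, X v) → ℝ) :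
    UJnorm X μ J (fun x => c * g x) = |c| * UJnorm X μ J g := by
  have hn : J.ncard ≠ 0 := by
    have := Set.ncard_pos (Set.toFinite J) |>.2 hJ
    omega
  have heven : Even (2 ^ J.ncard) := by
    refine ⟨2 ^ (J.ncard - 1), ?_⟩
    rw [← two_mul, ← pow_succ']
    congr 1
    omega
  have hNne : ((2 : ℝ) ^ J.ncard) ≠ 0 := by positivity
  unfold UJnorm
  rw [UJint_const_mul, ← heven.pow_abs,
    rpow_mul_left_aux (pow_nonneg (abs_nonneg c) _)]
  congr 1
  rw [← Real.rpow_natCast |c| (2 ^ J.ncard), ← Real.rpow_mul (abs_nonneg c)]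
  rw [show ((2 ^ J.ncard : ℕ) : ℝ) = (2 : ℝ) ^ J.ncard by push_cast; ring]
  rw [mul_one_div, div_self hNne, Real.rpow_one]

lemma termval_const_mul {V : Type} [Fintype V] [DecidableEq V] (X : V → Type)
    [∀ v, MeasurableSpace (X v)] (μ : ∀ v, Measure (X v)) (𝓙 : Finset (Set V))
    (h𝓙 : 𝓙.Nonempty) (h𝓙ne : ∀ J ∈ 𝓙, J.Nonempty)
    (c : ℝ) (g : (∀ v, X v) → ℝ) :
    (∏ J ∈ 𝓙, UJnorm X μ J (fun x => c * g x) ^ (2 ^ J.ncard)) ^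
      ((1 : ℝ) / ∑ J ∈ 𝓙, (2 : ℝ) ^ J.ncard) =
    |c| * (∏ J ∈ 𝓙, UJnorm X μ J g ^ (2 ^ J.ncard)) ^
      ((1 : ℝ) / ∑ J ∈ 𝓙, (2 : ℝ) ^ J.ncard) := by
  set C : ℝ := ∑ J ∈ 𝓙, (2 : ℝ) ^ J.ncard with hCdef
  set M : ℕ := ∑ J ∈ 𝓙, 2 ^ J.ncard with hMdef
  have hCM : C = (M : ℝ) := by
    rw [hCdef, hMdef]
    push_cast
    ring
  have hCpos : 0 < C := by
    rw [hCdef]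
    exact Finset.sum_pos (fun J _ => by positivity) h𝓙
  have h1 : ∏ J ∈ 𝓙, UJnorm X μ J (fun x => c * g x) ^ (2 ^ J.ncard)
      = |c| ^ M * ∏ J ∈ 𝓙, UJnorm X μ J g ^ (2 ^ J.ncard) := by
    rw [hMdef, ← Finset.prod_pow_eq_pow_sum, ← Finset.prod_mul_distrib]
    refine Finset.prod_congr rfl fun J hJ => ?_
    rw [UJnorm_const_mul X μ (h𝓙ne J hJ), mul_pow]
  rw [h1, rpow_mul_left_aux (pow_nonneg (abs_nonneg c) _)]
  congr 1
  rw [← Real.rpow_natCast |c| M, ← Real.rpow_mul (abs_nonneg c), ← hCM,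
    mul_one_div, div_self (ne_of_gt hCpos), Real.rpow_one]

lemma termval_nonneg {V : Type} [Fintype V] [DecidableEq V] (X : V → Type)
    [∀ v, MeasurableSpace (X v)] (μ : ∀ v, Measure (X v)) (𝓙 : Finset (Set V))
    (h𝓙ne : ∀ J ∈ 𝓙, J.Nonempty) (g : (∀ v, X v) → ℝ) :
    0 ≤ (∏ J ∈ 𝓙, UJnorm X μ J g ^ (2 ^ J.ncard)) ^
      ((1 : ℝ) / ∑ J ∈ 𝓙, (2 : ℝ) ^ J.ncard) := by
  refine Real.rpow_nonneg (Finset.prod_nonneg fun J hJ => ?_) _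
  have hn : J.ncard ≠ 0 := by
    have := Set.ncard_pos (Set.toFinite J) |>.2 (h𝓙ne J hJ)
    omega
  have heven : Even (2 ^ J.ncard) := by
    refine ⟨2 ^ (J.ncard - 1), ?_⟩
    rw [← two_mul, ← pow_succ']
    congr 1
    omega
  exact heven.pow_nonneg _

def DSet {V : Type} [Fintype V] [DecidableEq V] (X : V → Type)
    [∀ v, MeasurableSpace (X v)] (μ : ∀ v, Measure (X v)) (𝓙 : Finset (Set V))
    (f : (∀ v, X v) → ℝ) : Set ℝ :=
  {r : ℝ | ∃ (m : ℕ) (g : ℕ → (∀ v, X v) → ℝ),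
    (∀ i, (∃ C, ∀ x, |g i x| ≤ C) ∧ Measurable (g i)) ∧
    (∀ x, f x = ∑ i ∈ Finset.range (m + 1), g i x) ∧
    r = ∑ i ∈ Finset.range (m + 1),
        (∏ J ∈ 𝓙, UJnorm X μ J (g i) ^ (2 ^ J.ncard)) ^
          ((1 : ℝ) / ∑ J ∈ 𝓙, (2 : ℝ) ^ J.ncard)}

lemma DSet_nonneg {V : Type} [Fintype V] [DecidableEq V] (X : V → Type)
    [∀ v, MeasurableSpace (X v)] (μ : ∀ v, Measure (X v)) (𝓙 : Finset (Set V))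
    (h𝓙ne : ∀ J ∈ 𝓙, J.Nonempty) {f : (∀ v, X v) → ℝ} {r : ℝ}
    (hr : r ∈ DSet X μ 𝓙 f) : 0 ≤ r := by
  obtain ⟨m, g, hg, hsum, rfl⟩ := hr
  exact Finset.sum_nonneg fun i _ => termval_nonneg X μ 𝓙 h𝓙ne (g i)

lemma DSet_self_nonempty {V : Type} [Fintype V] [DecidableEq V] (X : V → Type)
    [∀ v, MeasurableSpace (X v)] (μ : ∀ v, Measure (X v)) (𝓙 : Finset (Set V))
    (f : (∀ v, X v) → ℝ) (hb : ∃ C, ∀ x, |f x| ≤ C) (hm : Measurable f) :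
    (DSet X μ 𝓙 f).Nonempty :=
  ⟨_, 0, fun _ => f, fun _ => ⟨hb, hm⟩, fun x => by simp, rfl⟩

lemma DSet_smul {V : Type} [Fintype V] [DecidableEq V] (X : V → Type)
    [∀ v, MeasurableSpace (X v)] (μ : ∀ v, Measure (X v)) (𝓙 : Finset (Set V))
    (h𝓙 : 𝓙.Nonempty) (h𝓙ne : ∀ J ∈ 𝓙, J.Nonempty)
    (c : ℝ) (f : (∀ v, X v) → ℝ) {a : ℝ} (ha : a ∈ DSet X μ 𝓙 f) :
    |c| * a ∈ DSet X μ 𝓙 (fun x => c * f x) := by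
  obtain ⟨m, g, hg, hsum, rfl⟩ := ha
  refine ⟨m, fun i x => c * g i x, fun i => ?_, fun x => ?_, ?_⟩
  · obtain ⟨⟨Ci, hCi⟩, hmi⟩ := hg i
    refine ⟨⟨|c| * Ci, fun x => ?_⟩, hmi.const_mul c⟩
    beta_reduce
    rw [abs_mul]
    exact mul_le_mul_of_nonneg_left (hCi x) (abs_nonneg c)
  · beta_reduce
    rw [hsum x, Finset.mul_sum]
  · rw [Finset.mul_sum]
    refine Finset.sum_congr rfl fun i _ => ?_
    beta_reduce
    exact (termval_const_mul X μ 𝓙 h𝓙 h𝓙ne c (g i)).symm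

lemma DSet_add {V : Type} [Fintype V] [DecidableEq V] (X : V → Type)
    [∀ v, MeasurableSpace (X v)] (μ : ∀ v, Measure (X v)) (𝓙 : Finset (Set V))
    (f g : (∀ v, X v) → ℝ) {a b : ℝ}
    (ha : a ∈ DSet X μ 𝓙 f) (hb : b ∈ DSet X μ 𝓙 g) :
    a + b ∈ DSet X μ 𝓙 (fun x => f x + g x) := by
  classical
  obtain ⟨m, p, hp, hps, rfl⟩ := ha
  obtain ⟨n, q, hq, hqs, rfl⟩ := hb
  refine ⟨m + n + 1, fun i => if i ≤ m then p i else q (i - (m + 1)),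
    fun i => ?_, fun x => ?_, ?_⟩
  · by_cases h : i ≤ m
    · simpa [h] using hp i
    · simpa [h] using hq (i - (m + 1))
  · conv_rhs => rw [show m + n + 1 + 1 = (m + 1) + (n + 1) by ring,
      Finset.sum_range_add]
    beta_reduce
    rw [hps x, hqs x]
    congr 1
    · refine Finset.sum_congr rfl fun i hi => ?_
      have h1 : i ≤ m := by have := Finset.mem_range.mp hi; omega
      rw [if_pos h1]
    · refine Finset.sum_congr rfl fun i hi => ?_
      rw [if_neg (show ¬ (m + 1 + i ≤ m) by omega),
        show m + 1 + i - (m + 1) = i by omega]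
  · conv_rhs => rw [show m + n + 1 + 1 = (m + 1) + (n + 1) by ring,
      Finset.sum_range_add]
    congr 1
    · refine Finset.sum_congr rfl fun i hi => ?_
      have h1 : i ≤ m := by have := Finset.mem_range.mp hi; omega
      beta_reduce
      rw [if_pos h1]
    · refine Finset.sum_congr rfl fun i hi => ?_
      beta_reduce
      rw [if_neg (show ¬ (m + 1 + i ≤ m) by omega),
        show m + 1 + i - (m + 1) = i by omega]

/-- `‖·‖_{U^{V,𝓙}}` is a seminorm on bounded measurable functions: absolute homogeneity
and the triangle inequality. -/
theorem UFamNorm_seminorm (V : Type) [Fintype V] [DecidableEq V] [Nonempty V]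
    (X : V → Type) [∀ v, MeasurableSpace (X v)]
    (μ : ∀ v, Measure (X v)) [∀ v, IsProbabilityMeasure (μ v)]
    (𝓙 : Finset (Set V)) (h𝓙 : 𝓙.Nonempty)
    (h𝓙ne : ∀ J ∈ 𝓙, J.Nonempty)
    (h𝓙anti : ∀ J ∈ 𝓙, ∀ J' ∈ 𝓙, J ⊆ J' → J = J')
    (f g : (∀ v, X v) → ℝ)
    (hfb : ∃ C, ∀ x, |f x| ≤ C) (hfm : Measurable f)
    (hgb : ∃ C, ∀ x, |g x| ≤ C) (hgm : Measurable g) (c : ℝ) :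
    UFamNorm X μ 𝓙 (fun x => c * f x) = |c| * UFamNorm X μ 𝓙 f ∧
    UFamNorm X μ 𝓙 (fun x => f x + g x) ≤ UFamNorm X μ 𝓙 f + UFamNorm X μ 𝓙 g := by
  classical
  have hUeq : ∀ h : (∀ v, X v) → ℝ, UFamNorm X μ 𝓙 h = sInf (DSet X μ 𝓙 h) :=
    fun h => rfl
  have hbdd : ∀ h : (∀ v, X v) → ℝ, BddBelow (DSet X μ 𝓙 h) := fun h =>
    ⟨0, fun r hr => DSet_nonneg X μ 𝓙 h𝓙ne hr⟩
  obtain ⟨a₀, ha₀⟩ := DSet_self_nonempty X μ 𝓙 f hfb hfm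
  obtain ⟨b₀, hb₀⟩ := DSet_self_nonempty X μ 𝓙 g hgb hgm
  constructor
  · rcases eq_or_ne c 0 with rfl | hc
    · rw [abs_zero, zero_mul, hUeq]
      have h0 : (0 : ℝ) ∈ DSet X μ 𝓙 (fun x => 0 * f x) := by
        have h1 := DSet_smul X μ 𝓙 h𝓙 h𝓙ne 0 f ha₀
        simpa using h1
      refine le_antisymm (csInf_le (hbdd _) h0)
        (le_csInf ⟨0, h0⟩ fun r hr => DSet_nonneg X μ 𝓙 h𝓙ne hr)
    · have hset : DSet X μ 𝓙 (fun x => c * f x) = |c| • DSet X μ 𝓙 f := by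
        ext r
        constructor
        · intro hr
          have h3 := DSet_smul X μ 𝓙 h𝓙 h𝓙ne c⁻¹ (fun x => c * f x) hr
          have hfe : (fun x => c⁻¹ * (fun x : ∀ v, X v => c * f x) x) = f := by
            funext x
            show c⁻¹ * (c * f x) = f x
            rw [← mul_assoc, inv_mul_cancel₀ hc, one_mul]
          rw [hfe] at h3
          refine ⟨|c⁻¹| * r, h3, ?_⟩
          simp only [smul_eq_mul]
          rw [abs_inv, ← mul_assoc,
            mul_inv_cancel₀ (abs_ne_zero.mpr hc), one_mul]
        · rintro ⟨a, ha, rfl⟩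
          simp only [smul_eq_mul]
          exact DSet_smul X μ 𝓙 h𝓙 h𝓙ne c f ha
      rw [hUeq, hUeq, hset, Real.sInf_smul_of_nonneg (abs_nonneg c), smul_eq_mul]
  · rw [hUeq, hUeq, hUeq]
    have key : ∀ a ∈ DSet X μ 𝓙 f, ∀ b ∈ DSet X μ 𝓙 g,
        sInf (DSet X μ 𝓙 (fun x => f x + g x)) ≤ a + b := fun a ha b hb =>
      csInf_le (hbdd _) (DSet_add X μ 𝓙 f g ha hb)
    have step : ∀ a ∈ DSet X μ 𝓙 f,
        sInf (DSet X μ 𝓙 (fun x => f x + g x)) - a ≤ sInf (DSet X μ 𝓙 g) :=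
      fun a ha => le_csInf ⟨b₀, hb₀⟩ fun b hb => by linarith [key a ha b hb]
    have final : sInf (DSet X μ 𝓙 (fun x => f x + g x)) - sInf (DSet X μ 𝓙 g) ≤
        sInf (DSet X μ 𝓙 f) :=
      le_csInf ⟨a₀, ha₀⟩ fun a ha => by linarith [step a ha]
    linarith

end
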